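/- arXiv:2509.15119 — 2 statements merged into one kernel-verified Lean document; each statement's English description precedes it below -/
import Mathlib

section
/- Let c ≥ 1 be an integer and let N = ((x_2 x_3)^c, (x_1 x_3)^c, (x_1 x_2)^c) ⊆ S = K[x_1, x_2, x_3]. Then reg(N) = 3c − 1. -/
open MvPolynomial

/-- The `p`-th term of the Koszul complex of the module `I` with respect to the
variables `x_1, …, x_n`:  `I ⊗ Λ^p (Sⁿ)`, realized as functions from the
`p`-element subsets of `Fin n` to `I`. -/
abbrev KoszulTerm {K : Type*} [Field K] {n : ℕ} (I : Ideal (MvPolynomial (Fin n) K))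
    (p : ℕ) : Type _ :=
  {s : Finset (Fin n) // s.card = p} → I

/-- The Koszul differential `I ⊗ Λ^{p+1}(Sⁿ) → I ⊗ Λ^p(Sⁿ)`,
`m ⊗ e_S ↦ Σ_{j ∈ S} (-1)^{|{i ∈ S : i < j}|} x_j m ⊗ e_{S \ {j}}`. -/
noncomputable def koszulD {K : Type*} [Field K] {n : ℕ} {I : Ideal (MvPolynomial (Fin n) K)}
    {p : ℕ} (f : KoszulTerm I (p + 1)) : KoszulTerm I p := fun s =>
  ∑ j : Fin n,
    if h : j ∈ s.val then 0
    else ((-1 : ℤ) ^ (s.val.filter (fun i => i < j)).card) •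
      ((MvPolynomial.X j : MvPolynomial (Fin n) K) •
        f ⟨insert j s.val, by rw [Finset.card_insert_of_notMem h, s.property]⟩)

/-- A cycle of the Koszul complex. -/
def IsKoszulCycle {K : Type*} [Field K] {n : ℕ} {I : Ideal (MvPolynomial (Fin n) K)}
    {p : ℕ} (f : KoszulTerm I p) : Prop :=
  match p, f with
  | 0, _ => True
  | _ + 1, f => koszulD f = 0

/-- A boundary of the Koszul complex. -/
def IsKoszulBoundary {K : Type*} [Field K] {n : ℕ} {I : Ideal (MvPolynomial (Fin n) K)}
    {p : ℕ} (f : KoszulTerm I p) : Prop :=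
  ∃ g : KoszulTerm I (p + 1), koszulD g = f

/-- `BettiNonzero I p q` says that the graded Betti number `β_{p,q}(I)` is nonzero:
by the standard identification `Tor_p(I, K)_q = H_p(I ⊗ Koszul(x_1,…,x_n))_q`
(where `e_S` has internal degree `|S|`), this happens iff there is a homogeneous
cycle of internal degree `q` (i.e. with polynomial coefficients homogeneous of degree
`q - p`) that is not a boundary. -/
def BettiNonzero {K : Type*} [Field K] {n : ℕ} (I : Ideal (MvPolynomial (Fin n) K))
    (p q : ℕ) : Prop :=
  ∃ f : KoszulTerm I p, IsKoszulCycle f ∧ ¬ IsKoszulBoundary f ∧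
    ∀ s, MvPolynomial.IsHomogeneous ((f s : MvPolynomial (Fin n) K)) (q - p)

/-- The Castelnuovo–Mumford regularity of an ideal `I` of `K[x_1,…,x_n]`:
`reg I = max { q - p : β_{p,q}(I) ≠ 0 }`. -/
noncomputable def reg {K : Type*} [Field K] {n : ℕ}
    (I : Ideal (MvPolynomial (Fin n) K)) : ℕ :=
  sSup { r : ℕ | ∃ p q : ℕ, BettiNonzero I p q ∧ q - p = r }

/-- The integral closure of a monomial ideal: the ideal generated by all monomials `u`
such that `u^k ∈ I^k` for some `k ≥ 1`. -/
noncomputable def intCl {K : Type*} [Field K] {n : ℕ} (I : Ideal (MvPolynomial (Fin n) K)) :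
    Ideal (MvPolynomial (Fin n) K) :=
  Ideal.span { u | (∃ a : Fin n →₀ ℕ, u = monomial a (1 : K)) ∧ ∃ k : ℕ, 1 ≤ k ∧ u ^ k ∈ I ^ k }

/-- `I` is a monomial ideal: it is generated by monomials. -/
def IsMonomialIdeal {K : Type*} [Field K] {n : ℕ}
    (I : Ideal (MvPolynomial (Fin n) K)) : Prop :=
  ∃ A : Set (Fin n →₀ ℕ), I = Ideal.span ((fun a => (monomial a (1 : K))) '' A)

/-- `x^e` is a minimal monomial generator of the monomial ideal `I`:
`x^e ∈ I` and no proper (monomial) divisor of `x^e` lies in `I`. -/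
def IsMinMonGen {K : Type*} [Field K] {n : ℕ} (I : Ideal (MvPolynomial (Fin n) K))
    (e : Fin n →₀ ℕ) : Prop :=
  (monomial e (1 : K)) ∈ I ∧
    ∀ i : Fin n, e i ≠ 0 → (monomial (e - Finsupp.single i 1) (1 : K)) ∉ I

/-- A set `G` (thought of as the minimal monomial generating set of a monomial ideal)
admits linear quotients: there is an ordering `u_1, …, u_M` of `G` such that each colon
ideal `(u_1, …, u_{k-1}) : u_k` is generated by a subset of the variables. -/
def HasLinQuot {K : Type*} [Field K] {n : ℕ}
    (G : Set (MvPolynomial (Fin n) K)) : Prop :=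
  ∃ (M : ℕ) (w : Fin M → MvPolynomial (Fin n) K),
    Function.Injective w ∧ Set.range w = G ∧
      ∀ k : Fin M, 0 < (k : ℕ) →
        ∃ V : Set (Fin n),
          (Ideal.span (w '' {j : Fin M | j < k})).colon (Ideal.span {w k}) =
            Ideal.span ((fun i => (X i : MvPolynomial (Fin n) K)) '' V)


set_option maxHeartbeats 1000000

namespace Stmt16
variable {K : Type*} [Field K]

/-- exponent of i-th variable -/
noncomputable abbrev E (i : Fin 3) : Fin 3 →₀ ℕ := Finsupp.single i 1

noncomputable def Idl (K : Type*) [Field K] (c : ℕ) : Ideal (MvPolynomial (Fin 3) K) :=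
  Ideal.span {((X 1 * X 2) ^ c : MvPolynomial (Fin 3) K), (X 0 * X 2) ^ c, (X 0 * X 1) ^ c}

/-- numeric divisibility predicate: x^ν ∈ Idl -/
def Mem (c : ℕ) (ν : Fin 3 →₀ ℕ) : Prop :=
  (c ≤ ν 1 ∧ c ≤ ν 2) ∨ (c ≤ ν 0 ∧ c ≤ ν 2) ∨ (c ≤ ν 0 ∧ c ≤ ν 1)

noncomputable def A0 (c : ℕ) : Fin 3 →₀ ℕ := Finsupp.single 1 c + Finsupp.single 2 c
noncomputable def A1 (c : ℕ) : Fin 3 →₀ ℕ := Finsupp.single 0 c + Finsupp.single 2 c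
noncomputable def A2 (c : ℕ) : Fin 3 →₀ ℕ := Finsupp.single 0 c + Finsupp.single 1 c

lemma gen0_eq (c : ℕ) : ((X 1 * X 2) ^ c : MvPolynomial (Fin 3) K) = monomial (A0 c) 1 := by
  rw [mul_pow, X_pow_eq_monomial, X_pow_eq_monomial, monomial_mul, one_mul]; rfl
lemma gen1_eq (c : ℕ) : ((X 0 * X 2) ^ c : MvPolynomial (Fin 3) K) = monomial (A1 c) 1 := by
  rw [mul_pow, X_pow_eq_monomial, X_pow_eq_monomial, monomial_mul, one_mul]; rfl
lemma gen2_eq (c : ℕ) : ((X 0 * X 1) ^ c : MvPolynomial (Fin 3) K) = monomial (A2 c) 1 := by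
  rw [mul_pow, X_pow_eq_monomial, X_pow_eq_monomial, monomial_mul, one_mul]; rfl

lemma A0_le_iff (c : ℕ) (ν : Fin 3 →₀ ℕ) : A0 c ≤ ν ↔ c ≤ ν 1 ∧ c ≤ ν 2 := by
  rw [Finsupp.le_def]
  constructor
  · intro h; exact ⟨by simpa [A0, Finsupp.single_apply] using h 1,
      by simpa [A0, Finsupp.single_apply] using h 2⟩
  · rintro ⟨h1, h2⟩ i
    fin_cases i <;> simp_all [A0, Finsupp.single_apply]
lemma A1_le_iff (c : ℕ) (ν : Fin 3 →₀ ℕ) : A1 c ≤ ν ↔ c ≤ ν 0 ∧ c ≤ ν 2 := by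
  rw [Finsupp.le_def]
  constructor
  · intro h; exact ⟨by simpa [A1, Finsupp.single_apply] using h 0,
      by simpa [A1, Finsupp.single_apply] using h 2⟩
  · rintro ⟨h1, h2⟩ i
    fin_cases i <;> simp_all [A1, Finsupp.single_apply]
lemma A2_le_iff (c : ℕ) (ν : Fin 3 →₀ ℕ) : A2 c ≤ ν ↔ c ≤ ν 0 ∧ c ≤ ν 1 := by
  rw [Finsupp.le_def]
  constructor
  · intro h; exact ⟨by simpa [A2, Finsupp.single_apply] using h 0,
      by simpa [A2, Finsupp.single_apply] using h 1⟩
  · rintro ⟨h1, h2⟩ i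
    fin_cases i <;> simp_all [A2, Finsupp.single_apply]

/-- Lemma A : coefficients of elements of Idl vanish outside `Mem` -/
lemma coeff_eq_zero_of_not_Mem {c : ℕ} {f : MvPolynomial (Fin 3) K} (hf : f ∈ Idl K c)
    {μ : Fin 3 →₀ ℕ} (h : ¬ Mem c μ) : coeff μ f = 0 := by
  rw [Idl, Ideal.mem_span_insert] at hf
  obtain ⟨a, z, hz, rfl⟩ := hf
  rw [Ideal.mem_span_insert] at hz
  obtain ⟨b, w, hw, rfl⟩ := hz
  rw [Ideal.mem_span_singleton] at hw
  obtain ⟨t, rfl⟩ := hw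
  rw [Mem] at h
  push_neg at h
  obtain ⟨h0, h1, h2⟩ := h
  have n0 : ¬ A0 c ≤ μ := by rw [A0_le_iff]; omega
  have n1 : ¬ A1 c ≤ μ := by rw [A1_le_iff]; omega
  have n2 : ¬ A2 c ≤ μ := by rw [A2_le_iff]; omega
  rw [coeff_add, coeff_add,
    gen0_eq, gen1_eq, gen2_eq, coeff_mul_monomial', coeff_mul_monomial', coeff_monomial_mul',
    if_neg n0, if_neg n1, if_neg n2]
  ring

lemma Mem_of_mem_support {c : ℕ} {f : MvPolynomial (Fin 3) K} (hf : f ∈ Idl K c)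
    {ν : Fin 3 →₀ ℕ} (h : ν ∈ f.support) : Mem c ν := by
  by_contra hm
  exact (mem_support_iff.mp h) (coeff_eq_zero_of_not_Mem hf hm)

/-- Lemma B : monomials with `Mem` exponent lie in Idl -/
lemma monomial_mem {c : ℕ} {ν : Fin 3 →₀ ℕ} (h : Mem c ν) (k : K) :
    (monomial ν k : MvPolynomial (Fin 3) K) ∈ Idl K c := by
  have key : ∀ A : Fin 3 →₀ ℕ, A ≤ ν → (monomial A 1 : MvPolynomial (Fin 3) K) ∈ Idl K c →
      (monomial ν k : MvPolynomial (Fin 3) K) ∈ Idl K c := by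
    intro A hA hmem
    have : (monomial ν k : MvPolynomial (Fin 3) K) = monomial (ν - A) k * monomial A 1 := by
      rw [monomial_mul, mul_one, tsub_add_cancel_of_le hA]
    rw [this]
    exact Ideal.mul_mem_left _ _ hmem
  rcases h with h | h | h
  · exact key (A0 c) ((A0_le_iff c ν).mpr h) (by rw [← gen0_eq]; exact Ideal.subset_span (by simp))
  · exact key (A1 c) ((A1_le_iff c ν).mpr h) (by rw [← gen1_eq]; exact Ideal.subset_span (by simp))
  · exact key (A2 c) ((A2_le_iff c ν).mpr h) (by rw [← gen2_eq]; exact Ideal.subset_span (by simp))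

/-- Lemma C -/
lemma mem_of_support (c : ℕ) (f : MvPolynomial (Fin 3) K)
    (h : ∀ ν ∈ f.support, Mem c ν) : f ∈ Idl K c := by
  rw [← support_sum_monomial_coeff f]
  exact Ideal.sum_mem _ fun ν hν => monomial_mem (h ν hν) _

lemma coeff_X_mul'' (j : Fin 3) (f : MvPolynomial (Fin 3) K) (μ : Fin 3 →₀ ℕ) :
    coeff μ (X j * f) = if μ j = 0 then 0 else coeff (μ - E j) f := by
  rw [mul_comm, coeff_mul_X']
  by_cases h : μ j = 0 <;> simp [Finsupp.mem_support_iff, h]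

lemma X_mul_monomial' (j : Fin 3) (a : Fin 3 →₀ ℕ) (r : K) :
    (X j : MvPolynomial (Fin 3) K) * monomial a r = monomial (a + E j) r := by
  rw [X, monomial_mul, one_mul, add_comm]

lemma coordE (μ : Fin 3 →₀ ℕ) (i j : Fin 3) : (μ - E i) j = μ j - (if i = j then 1 else 0) := by
  rw [Finsupp.tsub_apply, Finsupp.single_apply]

lemma addE (μ : Fin 3 →₀ ℕ) (i j : Fin 3) : (μ + E i) j = μ j + (if i = j then 1 else 0) := by
  rw [Finsupp.add_apply, Finsupp.single_apply]

lemma add_sub_E (ν : Fin 3 →₀ ℕ) (i : Fin 3) : ν + E i - E i = ν := by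
  ext j; rw [coordE, addE]; omega


lemma support_sub_mono (f : MvPolynomial (Fin 3) K) (s : Fin 3 →₀ ℕ) (d : K)
    (h : coeff s f = d) : (f - monomial s d).support ⊆ f.support.erase s := by
  intro t ht
  rw [mem_support_iff, coeff_sub, coeff_monomial] at ht
  rw [Finset.mem_erase, mem_support_iff]
  by_cases e : s = t
  · subst e; simp [h] at ht
  · rw [if_neg e, sub_zero] at ht; exact ⟨Ne.symm e, ht⟩

lemma card_sub_mono_le (f : MvPolynomial (Fin 3) K) (s : Fin 3 →₀ ℕ) (d : K)
    (h : coeff s f = d) : (f - monomial s d).support.card ≤ f.support.card :=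
  le_trans (Finset.card_le_card ((support_sub_mono f s d h).trans (Finset.erase_subset _ _)))
    le_rfl

lemma card_sub_mono_lt (f : MvPolynomial (Fin 3) K) (s : Fin 3 →₀ ℕ) (d : K)
    (h : coeff s f = d) (hs : s ∈ f.support) :
    (f - monomial s d).support.card < f.support.card :=
  lt_of_le_of_lt (Finset.card_le_card (support_sub_mono f s d h))
    (Finset.card_erase_lt_of_mem hs)


lemma coeffXE (j : Fin 3) (μ : Fin 3 →₀ ℕ) (f : MvPolynomial (Fin 3) K) :
    coeff (μ + E j) (X j * f) = coeff μ f := by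
  rw [add_comm]; exact coeff_X_mul μ j f

lemma coeffXE' {i j : Fin 3} (hij : i ≠ j) (μ : Fin 3 →₀ ℕ) (f : MvPolynomial (Fin 3) K) :
    coeff (μ + E i) (X j * f) = if μ j = 0 then 0 else coeff (μ + E i - E j) f := by
  have h1 : (μ + E i) j = μ j := by rw [addE, if_neg hij, add_zero]
  rw [coeff_X_mul'', h1]

/-- every Koszul 2-cycle with coefficients in Idl is a boundary (H₂ = 0). -/
lemma L2 {c : ℕ} (hc : 1 ≤ c) : ∀ (n : ℕ) (f01 f02 f12 : MvPolynomial (Fin 3) K),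
    f01 ∈ Idl K c → f02 ∈ Idl K c → f12 ∈ Idl K c →
    f01.support.card ≤ n →
    X 1 * f01 + X 2 * f02 = 0 → X 0 * f01 - X 2 * f12 = 0 → X 0 * f02 + X 1 * f12 = 0 →
    ∃ g ∈ Idl K c, f01 = X 2 * g ∧ f02 = -(X 1 * g) ∧ f12 = X 0 * g := by
  intro n
  induction n with
  | zero =>
    intro f01 f02 f12 h01 h02 h12 hcard he1 he2 he3
    have hz : f01 = 0 := support_eq_empty.mp (Finset.card_eq_zero.mp (Nat.le_zero.mp hcard))
    subst hz
    rw [mul_zero, zero_add] at he1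
    rw [mul_zero, zero_sub, neg_eq_zero] at he2
    have hf02 : f02 = 0 := by
      rcases mul_eq_zero.mp he1 with h | h
      · exact absurd h (X_ne_zero _)
      · exact h
    have hf12 : f12 = 0 := by
      rcases mul_eq_zero.mp he2 with h | h
      · exact absurd h (X_ne_zero _)
      · exact h
    exact ⟨0, Ideal.zero_mem _, by simp, by simp [hf02], by simp [hf12]⟩
  | succ n ih =>
    intro f01 f02 f12 h01 h02 h12 hcard he1 he2 he3
    by_cases hz : f01 = 0
    · subst hz
      rw [mul_zero, zero_add] at he1
      rw [mul_zero, zero_sub, neg_eq_zero] at he2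
      have hf02 : f02 = 0 := by
        rcases mul_eq_zero.mp he1 with h | h
        · exact absurd h (X_ne_zero _)
        · exact h
      have hf12 : f12 = 0 := by
        rcases mul_eq_zero.mp he2 with h | h
        · exact absurd h (X_ne_zero _)
        · exact h
      exact ⟨0, Ideal.zero_mem _, by simp, by simp [hf02], by simp [hf12]⟩
    obtain ⟨ν', hν'⟩ := (support_nonempty.mpr hz).exists_mem
    set d : K := coeff ν' f01 with hd
    have hdne : d ≠ 0 := mem_support_iff.mp hν'
    -- coefficient of eq1 at ν' + E 1
    have key1 : d + (if ν' 2 = 0 then 0 else coeff (ν' + E 1 - E 2) f02) = 0 := by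
      have h := congrArg (coeff (ν' + E 1)) he1
      rwa [coeff_add, coeffXE, coeffXE' (by decide), coeff_zero] at h
    -- deduce ν' 2 ≠ 0
    by_cases hν2 : ν' 2 = 0
    · rw [if_pos hν2, add_zero] at key1; exact absurd key1 hdne
    rw [if_neg hν2] at key1
    -- ν := ν' - E 2
    set ν : Fin 3 →₀ ℕ := ν' - E 2 with hνdef
    have hνE : ν + E 2 = ν' := by
      ext j; fin_cases j <;> simp [addE, hνdef, coordE] <;> omega
    have s1 : ν' + E 1 - E 2 = ν + E 1 := by
      ext j; fin_cases j <;> simp [addE, hνdef, coordE] <;> omega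
    rw [s1] at key1
    -- key1 : d + coeff (ν + E 1) f02 = 0
    have key2 : d - (if ν' 2 = 0 then 0 else coeff (ν' + E 0 - E 2) f12) = 0 := by
      have h := congrArg (coeff (ν' + E 0)) he2
      rwa [coeff_sub, coeffXE, coeffXE' (by decide), coeff_zero] at h
    rw [if_neg hν2] at key2
    have s2 : ν' + E 0 - E 2 = ν + E 0 := by
      ext j; fin_cases j <;> simp [addE, hνdef, coordE] <;> omega
    rw [s2, sub_eq_zero] at key2
    -- key2 : d = coeff (ν + E 0) f12
    have hm2 : Mem c (ν + E 2) := by rw [hνE]; exact Mem_of_mem_support h01 hν'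
    have hm1 : Mem c (ν + E 1) := Mem_of_mem_support h02 (mem_support_iff.mpr (by
      intro h; rw [h, add_zero] at key1; exact hdne key1))
    have hm0 : Mem c (ν + E 0) := Mem_of_mem_support h12 (mem_support_iff.mpr (by
      intro h; rw [h] at key2; exact hdne key2))
    have hmν : Mem c ν := by
      simp [Mem, addE] at hm0 hm1 hm2 ⊢
      omega
    have c01 : coeff (ν + E 2) f01 = d := by rw [hνE]
    have c02 : coeff (ν + E 1) f02 = -d := by linear_combination key1
    have c12 : coeff (ν + E 0) f12 = d := key2.symm
    have hmem01 : f01 - monomial (ν + E 2) d ∈ Idl K c :=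
      Ideal.sub_mem _ h01 (monomial_mem hm2 d)
    have hmem02 : f02 - monomial (ν + E 1) (-d) ∈ Idl K c :=
      Ideal.sub_mem _ h02 (monomial_mem hm1 (-d))
    have hmem12 : f12 - monomial (ν + E 0) d ∈ Idl K c :=
      Ideal.sub_mem _ h12 (monomial_mem hm0 d)
    have hcard' : (f01 - monomial (ν + E 2) d).support.card ≤ n := by
      have h1 := Finset.card_le_card (support_sub_mono f01 (ν + E 2) d c01)
      have h2 := Finset.card_erase_lt_of_mem (show ν + E 2 ∈ f01.support by rw [hνE]; exact hν')
      omega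
    have p1 : X 1 * monomial (ν + E 2) d = monomial (ν + E 2 + E 1) d := X_mul_monomial' _ _ _
    have p2 : X 2 * monomial (ν + E 1) (-d) = monomial (ν + E 1 + E 2) (-d) := X_mul_monomial' _ _ _
    have p3 : X 0 * monomial (ν + E 2) d = monomial (ν + E 2 + E 0) d := X_mul_monomial' _ _ _
    have p4 : X 2 * monomial (ν + E 0) d = monomial (ν + E 0 + E 2) d := X_mul_monomial' _ _ _
    have p5 : X 0 * monomial (ν + E 1) (-d) = monomial (ν + E 1 + E 0) (-d) := X_mul_monomial' _ _ _
    have p6 : X 1 * monomial (ν + E 0) d = monomial (ν + E 0 + E 1) d := X_mul_monomial' _ _ _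
    have q1 : X 1 * monomial (ν + E 2) d + X 2 * monomial (ν + E 1) (-d) = 0 := by
      rw [p1, p2, add_right_comm, map_neg]; ring
    have q2 : X 0 * monomial (ν + E 2) d - X 2 * monomial (ν + E 0) d = 0 := by
      rw [p3, p4, add_right_comm]; ring
    have q3 : X 0 * monomial (ν + E 1) (-d) + X 1 * monomial (ν + E 0) d = 0 := by
      rw [p5, p6, add_right_comm, map_neg]; ring
    have he1' : X 1 * (f01 - monomial (ν + E 2) d) + X 2 * (f02 - monomial (ν + E 1) (-d)) = 0 := by
      linear_combination he1 - q1
    have he2' : X 0 * (f01 - monomial (ν + E 2) d) - X 2 * (f12 - monomial (ν + E 0) d) = 0 := by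
      linear_combination he2 - q2
    have he3' : X 0 * (f02 - monomial (ν + E 1) (-d)) + X 1 * (f12 - monomial (ν + E 0) d) = 0 := by
      linear_combination he3 - q3
    obtain ⟨g', hg', hg1, hg2, hg3⟩ := ih (f01 - monomial (ν + E 2) d)
      (f02 - monomial (ν + E 1) (-d)) (f12 - monomial (ν + E 0) d)
      hmem01 hmem02 hmem12 hcard' he1' he2' he3'
    refine ⟨g' + monomial ν d, Ideal.add_mem _ hg' (monomial_mem hmν d), ?_, ?_, ?_⟩
    · have hx : X 2 * monomial ν d = monomial (ν + E 2) d := X_mul_monomial' _ _ _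
      linear_combination hg1 - hx
    · have hx : X 1 * monomial ν d = monomial (ν + E 1) d := X_mul_monomial' _ _ _
      have hneg : (monomial (ν + E 1) (-d) : MvPolynomial (Fin 3) K) = -(monomial (ν + E 1) d) := by
        rw [map_neg]
      linear_combination hg2 + hx + hneg
    · have hx : X 0 * monomial ν d = monomial (ν + E 0) d := X_mul_monomial' _ _ _
      linear_combination hg3 - hx

lemma sub_add_E (ν : Fin 3 →₀ ℕ) (j : Fin 3) (h : ν j ≠ 0) : ν - E j + E j = ν := by
  ext i; rw [addE, coordE]
  by_cases e : j = i
  · subst e; simp at h ⊢; omega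
  · simp [e]

/-- high-degree elements of Idl lie in (x₀,x₁,x₂)·Idl -/
lemma L0 {c : ℕ} (hc : 1 ≤ c) : ∀ (n : ℕ) (h : MvPolynomial (Fin 3) K), h ∈ Idl K c →
    (∀ ν ∈ h.support, 3 * c ≤ ν 0 + ν 1 + ν 2) → h.support.card ≤ n →
    ∃ u0 u1 u2 : MvPolynomial (Fin 3) K, u0 ∈ Idl K c ∧ u1 ∈ Idl K c ∧ u2 ∈ Idl K c ∧
      h = X 0 * u0 + X 1 * u1 + X 2 * u2 := by
  intro n
  induction n with
  | zero =>
    intro h hmem hdeg hcard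
    have hz : h = 0 := support_eq_empty.mp (Finset.card_eq_zero.mp (Nat.le_zero.mp hcard))
    exact ⟨0, 0, 0, Ideal.zero_mem _, Ideal.zero_mem _, Ideal.zero_mem _, by simp [hz]⟩
  | succ n ih =>
    intro h hmem hdeg hcard
    by_cases hz : h = 0
    · exact ⟨0, 0, 0, Ideal.zero_mem _, Ideal.zero_mem _, Ideal.zero_mem _, by simp [hz]⟩
    obtain ⟨ν, hν⟩ := (support_nonempty.mpr hz).exists_mem
    set d : K := coeff ν h with hd
    have hdne : d ≠ 0 := mem_support_iff.mp hν
    have hM : Mem c ν := Mem_of_mem_support hmem hν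
    have hD : 3 * c ≤ ν 0 + ν 1 + ν 2 := hdeg ν hν
    have key : (ν 0 ≠ 0 ∧ Mem c (ν - E 0)) ∨ (ν 1 ≠ 0 ∧ Mem c (ν - E 1)) ∨
        (ν 2 ≠ 0 ∧ Mem c (ν - E 2)) := by
      simp only [Mem, coordE] at hM ⊢
      simp only [show ((0:Fin 3) = 0) = True from by simp, show ((0:Fin 3) = 1) = False from by simp,
        show ((0:Fin 3) = 2) = False from by simp, show ((1:Fin 3) = 0) = False from by simp,
        show ((1:Fin 3) = 1) = True from by simp, show ((1:Fin 3) = 2) = False from by simp,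
        show ((2:Fin 3) = 0) = False from by simp, show ((2:Fin 3) = 1) = False from by simp,
        show ((2:Fin 3) = 2) = True from by simp, if_true, if_false]
      omega
    have hmem' : h - monomial ν d ∈ Idl K c := Ideal.sub_mem _ hmem (monomial_mem hM d)
    have hsupp := support_sub_mono h ν d rfl
    have hdeg' : ∀ τ ∈ (h - monomial ν d).support, 3 * c ≤ τ 0 + τ 1 + τ 2 := fun τ hτ =>
      hdeg τ (Finset.mem_of_mem_erase (hsupp hτ))
    have hcard' : (h - monomial ν d).support.card ≤ n := by
      have h1 := Finset.card_le_card hsupp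
      have h2 := Finset.card_erase_lt_of_mem hν
      omega
    obtain ⟨u0, u1, u2, m0, m1, m2, heq⟩ := ih (h - monomial ν d) hmem' hdeg' hcard'
    rcases key with ⟨hj, hMj⟩ | ⟨hj, hMj⟩ | ⟨hj, hMj⟩
    · refine ⟨u0 + monomial (ν - E 0) d, u1, u2,
        Ideal.add_mem _ m0 (monomial_mem hMj d), m1, m2, ?_⟩
      have hx : X 0 * monomial (ν - E 0) d = monomial ν d := by
        rw [X_mul_monomial', sub_add_E ν 0 hj]
      linear_combination heq - hx
    · refine ⟨u0, u1 + monomial (ν - E 1) d, u2,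
        m0, Ideal.add_mem _ m1 (monomial_mem hMj d), m2, ?_⟩
      have hx : X 1 * monomial (ν - E 1) d = monomial ν d := by
        rw [X_mul_monomial', sub_add_E ν 1 hj]
      linear_combination heq - hx
    · refine ⟨u0, u1, u2 + monomial (ν - E 2) d,
        m0, m1, Ideal.add_mem _ m2 (monomial_mem hMj d), ?_⟩
      have hx : X 2 * monomial (ν - E 2) d = monomial ν d := by
        rw [X_mul_monomial', sub_add_E ν 2 hj]
      linear_combination heq - hx

-- helper: clean Fin-3 ite reduction for omega
lemma Mem_sub0 (c : ℕ) (μ : Fin 3 →₀ ℕ) : Mem c (μ - E 0) ↔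
    (c ≤ μ 1 ∧ c ≤ μ 2) ∨ (c ≤ μ 0 - 1 ∧ c ≤ μ 2) ∨ (c ≤ μ 0 - 1 ∧ c ≤ μ 1) := by
  simp only [Mem, coordE]
  simp only [show ((0:Fin 3) = 0) = True from by simp,
        show ((0:Fin 3) = 1) = False from by simp, show ((0:Fin 3) = 2) = False from by simp,
        show ((1:Fin 3) = 0) = False from by simp, show ((1:Fin 3) = 1) = True from by simp,
        show ((1:Fin 3) = 2) = False from by simp, show ((2:Fin 3) = 0) = False from by simp,
        show ((2:Fin 3) = 1) = False from by simp, show ((2:Fin 3) = 2) = True from by simp,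
        if_true, if_false]
  omega

lemma Mem_sub1 (c : ℕ) (μ : Fin 3 →₀ ℕ) : Mem c (μ - E 1) ↔
    (c ≤ μ 1 - 1 ∧ c ≤ μ 2) ∨ (c ≤ μ 0 ∧ c ≤ μ 2) ∨ (c ≤ μ 0 ∧ c ≤ μ 1 - 1) := by
  simp only [Mem, coordE]
  simp only [show ((0:Fin 3) = 0) = True from by simp,
        show ((0:Fin 3) = 1) = False from by simp, show ((0:Fin 3) = 2) = False from by simp,
        show ((1:Fin 3) = 0) = False from by simp, show ((1:Fin 3) = 1) = True from by simp,
        show ((1:Fin 3) = 2) = False from by simp, show ((2:Fin 3) = 0) = False from by simp,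
        show ((2:Fin 3) = 1) = False from by simp, show ((2:Fin 3) = 2) = True from by simp,
        if_true, if_false]
  omega

lemma Mem_sub2 (c : ℕ) (μ : Fin 3 →₀ ℕ) : Mem c (μ - E 2) ↔
    (c ≤ μ 1 ∧ c ≤ μ 2 - 1) ∨ (c ≤ μ 0 ∧ c ≤ μ 2 - 1) ∨ (c ≤ μ 0 ∧ c ≤ μ 1) := by
  simp only [Mem, coordE]
  simp only [show ((0:Fin 3) = 0) = True from by simp,
        show ((0:Fin 3) = 1) = False from by simp, show ((0:Fin 3) = 2) = False from by simp,
        show ((1:Fin 3) = 0) = False from by simp, show ((1:Fin 3) = 1) = True from by simp,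
        show ((1:Fin 3) = 2) = False from by simp, show ((2:Fin 3) = 0) = False from by simp,
        show ((2:Fin 3) = 1) = False from by simp, show ((2:Fin 3) = 2) = True from by simp,
        if_true, if_false]
  omega

lemma Mem_sub01 (c : ℕ) (μ : Fin 3 →₀ ℕ) : Mem c (μ - E 0 - E 1) ↔
    (c ≤ μ 1 - 1 ∧ c ≤ μ 2) ∨ (c ≤ μ 0 - 1 ∧ c ≤ μ 2) ∨ (c ≤ μ 0 - 1 ∧ c ≤ μ 1 - 1) := by
  simp only [Mem, coordE]
  simp only [show ((0:Fin 3) = 0) = True from by simp,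
        show ((0:Fin 3) = 1) = False from by simp, show ((0:Fin 3) = 2) = False from by simp,
        show ((1:Fin 3) = 0) = False from by simp, show ((1:Fin 3) = 1) = True from by simp,
        show ((1:Fin 3) = 2) = False from by simp, show ((2:Fin 3) = 0) = False from by simp,
        show ((2:Fin 3) = 1) = False from by simp, show ((2:Fin 3) = 2) = True from by simp,
        if_true, if_false]
  omega

lemma Mem_sub02 (c : ℕ) (μ : Fin 3 →₀ ℕ) : Mem c (μ - E 0 - E 2) ↔
    (c ≤ μ 1 ∧ c ≤ μ 2 - 1) ∨ (c ≤ μ 0 - 1 ∧ c ≤ μ 2 - 1) ∨ (c ≤ μ 0 - 1 ∧ c ≤ μ 1) := by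
  simp only [Mem, coordE]
  simp only [show ((0:Fin 3) = 0) = True from by simp,
        show ((0:Fin 3) = 1) = False from by simp, show ((0:Fin 3) = 2) = False from by simp,
        show ((1:Fin 3) = 0) = False from by simp, show ((1:Fin 3) = 1) = True from by simp,
        show ((1:Fin 3) = 2) = False from by simp, show ((2:Fin 3) = 0) = False from by simp,
        show ((2:Fin 3) = 1) = False from by simp, show ((2:Fin 3) = 2) = True from by simp,
        if_true, if_false]
  omega

lemma Mem_sub12 (c : ℕ) (μ : Fin 3 →₀ ℕ) : Mem c (μ - E 1 - E 2) ↔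
    (c ≤ μ 1 - 1 ∧ c ≤ μ 2 - 1) ∨ (c ≤ μ 0 ∧ c ≤ μ 2 - 1) ∨ (c ≤ μ 0 ∧ c ≤ μ 1 - 1) := by
  simp only [Mem, coordE]
  simp only [show ((0:Fin 3) = 0) = True from by simp,
        show ((0:Fin 3) = 1) = False from by simp, show ((0:Fin 3) = 2) = False from by simp,
        show ((1:Fin 3) = 0) = False from by simp, show ((1:Fin 3) = 1) = True from by simp,
        show ((1:Fin 3) = 2) = False from by simp, show ((2:Fin 3) = 0) = False from by simp,
        show ((2:Fin 3) = 1) = False from by simp, show ((2:Fin 3) = 2) = True from by simp,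
        if_true, if_false]
  omega

section Solver

lemma solver {c : ℕ} (hc : 1 ≤ c) (μ : Fin 3 →₀ ℕ) (hdeg : 3 * c + 1 ≤ μ 0 + μ 1 + μ 2)
    (c0 c1 c2 : K) (hsum : c0 + c1 + c2 = 0)
    (h0 : c0 ≠ 0 → μ 0 ≠ 0 ∧ Mem c (μ - E 0))
    (h1 : c1 ≠ 0 → μ 1 ≠ 0 ∧ Mem c (μ - E 1))
    (h2 : c2 ≠ 0 → μ 2 ≠ 0 ∧ Mem c (μ - E 2)) :
    ∃ d01 d02 d12 : K,
      (d01 ≠ 0 → μ 0 ≠ 0 ∧ μ 1 ≠ 0 ∧ Mem c (μ - E 0 - E 1)) ∧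
      (d02 ≠ 0 → μ 0 ≠ 0 ∧ μ 2 ≠ 0 ∧ Mem c (μ - E 0 - E 2)) ∧
      (d12 ≠ 0 → μ 1 ≠ 0 ∧ μ 2 ≠ 0 ∧ Mem c (μ - E 1 - E 2)) ∧
      c0 = -d01 - d02 ∧ c1 = d01 - d12 ∧ c2 = d02 + d12 := by
  by_cases hc0 : c0 = 0 <;> by_cases hc1 : c1 = 0 <;> by_cases hc2 : c2 = 0
  -- (0,0,0)
  · exact ⟨0, 0, 0, by simp, by simp, by simp, by rw [hc0]; ring, by rw [hc1]; ring,
      by rw [hc2]; ring⟩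
  -- (0,0,≠0) : contradiction
  · exfalso; apply hc2; linear_combination hsum - hc0 - hc1
  -- (0,≠,0) : contradiction
  · exfalso; apply hc1; linear_combination hsum - hc0 - hc2
  -- (0,≠,≠)
  · obtain ⟨hμ1, hM1⟩ := h1 hc1
    obtain ⟨hμ2, hM2⟩ := h2 hc2
    have hP : (μ 1 ≠ 0 ∧ μ 2 ≠ 0 ∧ Mem c (μ - E 1 - E 2)) ∨
        ((μ 0 ≠ 0 ∧ μ 1 ≠ 0 ∧ Mem c (μ - E 0 - E 1)) ∧
         (μ 0 ≠ 0 ∧ μ 2 ≠ 0 ∧ Mem c (μ - E 0 - E 2))) := by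
      simp only [Mem_sub01, Mem_sub02, Mem_sub12]
      simp only [Mem_sub0, Mem_sub1, Mem_sub2] at hM1 hM2
      omega
    rcases hP with hP | ⟨hPa, hPb⟩
    · exact ⟨0, 0, -c1, by simp, by simp, fun _ => hP, by rw [hc0]; ring, by ring,
        by linear_combination hsum - hc0⟩
    · exact ⟨c1, c2, 0, fun _ => hPa, fun _ => hPb, by simp, by linear_combination hsum,
        by ring, by ring⟩
  -- (≠,0,0) : contradiction
  · exfalso; apply hc0; linear_combination hsum - hc1 - hc2
  -- (≠,0,≠)
  · obtain ⟨hμ0, hM0⟩ := h0 hc0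
    obtain ⟨hμ2, hM2⟩ := h2 hc2
    have hP : (μ 0 ≠ 0 ∧ μ 2 ≠ 0 ∧ Mem c (μ - E 0 - E 2)) ∨
        ((μ 0 ≠ 0 ∧ μ 1 ≠ 0 ∧ Mem c (μ - E 0 - E 1)) ∧
         (μ 1 ≠ 0 ∧ μ 2 ≠ 0 ∧ Mem c (μ - E 1 - E 2))) := by
      simp only [Mem_sub01, Mem_sub02, Mem_sub12]
      simp only [Mem_sub0, Mem_sub1, Mem_sub2] at hM0 hM2
      omega
    rcases hP with hP | ⟨hPa, hPb⟩
    · exact ⟨0, -c0, 0, by simp, fun _ => hP, by simp, by ring, by rw [hc1]; ring,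
        by linear_combination hsum - hc1⟩
    · exact ⟨-c0, 0, -c0, fun _ => hPa, by simp, fun _ => hPb, by ring,
        by rw [hc1]; ring, by linear_combination hsum - hc1⟩
  -- (≠,≠,0)
  · obtain ⟨hμ0, hM0⟩ := h0 hc0
    obtain ⟨hμ1, hM1⟩ := h1 hc1
    have hP : (μ 0 ≠ 0 ∧ μ 1 ≠ 0 ∧ Mem c (μ - E 0 - E 1)) ∨
        ((μ 0 ≠ 0 ∧ μ 2 ≠ 0 ∧ Mem c (μ - E 0 - E 2)) ∧
         (μ 1 ≠ 0 ∧ μ 2 ≠ 0 ∧ Mem c (μ - E 1 - E 2))) := by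
      simp only [Mem_sub01, Mem_sub02, Mem_sub12]
      simp only [Mem_sub0, Mem_sub1, Mem_sub2] at hM0 hM1
      omega
    rcases hP with hP | ⟨hPa, hPb⟩
    · exact ⟨-c0, 0, 0, fun _ => hP, by simp, by simp, by ring,
        by linear_combination hsum - hc2, by rw [hc2]; ring⟩
    · exact ⟨0, -c0, -c1, by simp, fun _ => hPa, fun _ => hPb, by ring, by ring,
        by linear_combination hsum⟩
  -- (≠,≠,≠)
  · obtain ⟨hμ0, hM0⟩ := h0 hc0
    obtain ⟨hμ1, hM1⟩ := h1 hc1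
    obtain ⟨hμ2, hM2⟩ := h2 hc2
    have hP : ((μ 0 ≠ 0 ∧ μ 1 ≠ 0 ∧ Mem c (μ - E 0 - E 1)) ∧
               (μ 0 ≠ 0 ∧ μ 2 ≠ 0 ∧ Mem c (μ - E 0 - E 2))) ∨
        ((μ 0 ≠ 0 ∧ μ 1 ≠ 0 ∧ Mem c (μ - E 0 - E 1)) ∧
         (μ 1 ≠ 0 ∧ μ 2 ≠ 0 ∧ Mem c (μ - E 1 - E 2))) ∨
        ((μ 0 ≠ 0 ∧ μ 2 ≠ 0 ∧ Mem c (μ - E 0 - E 2)) ∧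
         (μ 1 ≠ 0 ∧ μ 2 ≠ 0 ∧ Mem c (μ - E 1 - E 2))) := by
      simp only [Mem_sub01, Mem_sub02, Mem_sub12]
      simp only [Mem_sub0, Mem_sub1, Mem_sub2] at hM0 hM1 hM2
      omega
    rcases hP with ⟨hPa, hPb⟩ | ⟨hPa, hPb⟩ | ⟨hPa, hPb⟩
    · exact ⟨c1, c2, 0, fun _ => hPa, fun _ => hPb, by simp, by linear_combination hsum,
        by ring, by ring⟩
    · exact ⟨-c0, 0, -c0 - c1, fun _ => hPa, by simp, fun _ => hPb, by ring, by ring,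
        by linear_combination hsum⟩
    · exact ⟨0, -c0, -c1, by simp, fun _ => hPa, fun _ => hPb, by ring, by ring,
        by linear_combination hsum⟩

end Solver

lemma L1 {c : ℕ} (hc : 1 ≤ c) : ∀ (n : ℕ) (f0 f1 f2 : MvPolynomial (Fin 3) K),
    f0 ∈ Idl K c → f1 ∈ Idl K c → f2 ∈ Idl K c →
    (∀ ν ∈ f0.support, 3 * c ≤ ν 0 + ν 1 + ν 2) →
    (∀ ν ∈ f1.support, 3 * c ≤ ν 0 + ν 1 + ν 2) →
    (∀ ν ∈ f2.support, 3 * c ≤ ν 0 + ν 1 + ν 2) →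
    f0.support.card + f1.support.card + f2.support.card ≤ n →
    X 0 * f0 + X 1 * f1 + X 2 * f2 = 0 →
    ∃ g01 g02 g12 : MvPolynomial (Fin 3) K, g01 ∈ Idl K c ∧ g02 ∈ Idl K c ∧ g12 ∈ Idl K c ∧
      f0 = -(X 1 * g01) - X 2 * g02 ∧ f1 = X 0 * g01 - X 2 * g12 ∧ f2 = X 0 * g02 + X 1 * g12 := by
  intro n
  induction n with
  | zero =>
    intro f0 f1 f2 hf0 hf1 hf2 hd0 hd1 hd2 hcard hcyc
    have h0 : f0 = 0 := support_eq_empty.mp (Finset.card_eq_zero.mp (by omega))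
    have h1 : f1 = 0 := support_eq_empty.mp (Finset.card_eq_zero.mp (by omega))
    have h2 : f2 = 0 := support_eq_empty.mp (Finset.card_eq_zero.mp (by omega))
    exact ⟨0, 0, 0, Ideal.zero_mem _, Ideal.zero_mem _, Ideal.zero_mem _,
      by simp [h0], by simp [h1], by simp [h2]⟩
  | succ n ih =>
    intro f0 f1 f2 hf0 hf1 hf2 hd0 hd1 hd2 hcard hcyc
    by_cases hall : f0 = 0 ∧ f1 = 0 ∧ f2 = 0
    · exact ⟨0, 0, 0, Ideal.zero_mem _, Ideal.zero_mem _, Ideal.zero_mem _,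
        by simp [hall.1], by simp [hall.2.1], by simp [hall.2.2]⟩
    have hpick : ∃ μ : Fin 3 →₀ ℕ, (3 * c + 1 ≤ μ 0 + μ 1 + μ 2) ∧
        ((μ 0 ≠ 0 ∧ μ - E 0 ∈ f0.support) ∨ (μ 1 ≠ 0 ∧ μ - E 1 ∈ f1.support) ∨
         (μ 2 ≠ 0 ∧ μ - E 2 ∈ f2.support)) := by
      by_cases h0 : f0 = 0
      · by_cases h1 : f1 = 0
        · have h2 : f2 ≠ 0 := fun h => hall ⟨h0, h1, h⟩
          obtain ⟨ν, hν⟩ := (support_nonempty.mpr h2).exists_mem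
          refine ⟨ν + E 2, ?_, Or.inr (Or.inr ⟨by simp [addE], by rw [add_sub_E]; exact hν⟩)⟩
          have := hd2 ν hν
          simp only [addE]
          norm_num
          omega
        · obtain ⟨ν, hν⟩ := (support_nonempty.mpr h1).exists_mem
          refine ⟨ν + E 1, ?_, Or.inr (Or.inl ⟨by simp [addE], by rw [add_sub_E]; exact hν⟩)⟩
          have := hd1 ν hν
          simp only [addE]
          norm_num
          omega
      · obtain ⟨ν, hν⟩ := (support_nonempty.mpr h0).exists_mem
        refine ⟨ν + E 0, ?_, Or.inl ⟨by simp [addE], by rw [add_sub_E]; exact hν⟩⟩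
        have := hd0 ν hν
        simp only [addE]
        norm_num
        omega
    obtain ⟨μ, hμdeg, hμpick⟩ := hpick
    have hsum := congrArg (coeff μ) hcyc
    rw [coeff_add, coeff_add, coeff_X_mul'', coeff_X_mul'', coeff_X_mul'', coeff_zero] at hsum
    set c0 : K := if μ 0 = 0 then 0 else coeff (μ - E 0) f0 with hc0def
    set c1 : K := if μ 1 = 0 then 0 else coeff (μ - E 1) f1 with hc1def
    set c2 : K := if μ 2 = 0 then 0 else coeff (μ - E 2) f2 with hc2def
    have h0 : c0 ≠ 0 → μ 0 ≠ 0 ∧ Mem c (μ - E 0) := by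
      intro hne
      by_cases h : μ 0 = 0
      · rw [hc0def, if_pos h] at hne; exact absurd rfl hne
      · rw [hc0def, if_neg h] at hne
        exact ⟨h, Mem_of_mem_support hf0 (mem_support_iff.mpr hne)⟩
    have h1 : c1 ≠ 0 → μ 1 ≠ 0 ∧ Mem c (μ - E 1) := by
      intro hne
      by_cases h : μ 1 = 0
      · rw [hc1def, if_pos h] at hne; exact absurd rfl hne
      · rw [hc1def, if_neg h] at hne
        exact ⟨h, Mem_of_mem_support hf1 (mem_support_iff.mpr hne)⟩
    have h2 : c2 ≠ 0 → μ 2 ≠ 0 ∧ Mem c (μ - E 2) := by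
      intro hne
      by_cases h : μ 2 = 0
      · rw [hc2def, if_pos h] at hne; exact absurd rfl hne
      · rw [hc2def, if_neg h] at hne
        exact ⟨h, Mem_of_mem_support hf2 (mem_support_iff.mpr hne)⟩
    obtain ⟨d01, d02, d12, g01g, g02g, g12g, e0, e1, e2⟩ :=
      solver hc μ hμdeg c0 c1 c2 hsum h0 h1 h2
    have hA : X 1 * monomial (μ - E 0 - E 1) d01 = monomial (μ - E 0) d01 := by
      by_cases h : d01 = 0
      · rw [h]; simp
      · obtain ⟨hμ0, hμ1, _⟩ := g01g h
        have he : μ - E 0 - E 1 + E 1 = μ - E 0 := by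
          ext j; fin_cases j <;> simp [addE, coordE] <;> omega
        rw [X_mul_monomial', he]
    have hB : X 0 * monomial (μ - E 0 - E 1) d01 = monomial (μ - E 1) d01 := by
      by_cases h : d01 = 0
      · rw [h]; simp
      · obtain ⟨hμ0, hμ1, _⟩ := g01g h
        have he : μ - E 0 - E 1 + E 0 = μ - E 1 := by
          ext j; fin_cases j <;> simp [addE, coordE] <;> omega
        rw [X_mul_monomial', he]
    have hC : X 2 * monomial (μ - E 0 - E 2) d02 = monomial (μ - E 0) d02 := by
      by_cases h : d02 = 0
      · rw [h]; simp
      · obtain ⟨hμ0, hμ2, _⟩ := g02g h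
        have he : μ - E 0 - E 2 + E 2 = μ - E 0 := by
          ext j; fin_cases j <;> simp [addE, coordE] <;> omega
        rw [X_mul_monomial', he]
    have hD : X 0 * monomial (μ - E 0 - E 2) d02 = monomial (μ - E 2) d02 := by
      by_cases h : d02 = 0
      · rw [h]; simp
      · obtain ⟨hμ0, hμ2, _⟩ := g02g h
        have he : μ - E 0 - E 2 + E 0 = μ - E 2 := by
          ext j; fin_cases j <;> simp [addE, coordE] <;> omega
        rw [X_mul_monomial', he]
    have hE : X 2 * monomial (μ - E 1 - E 2) d12 = monomial (μ - E 1) d12 := by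
      by_cases h : d12 = 0
      · rw [h]; simp
      · obtain ⟨hμ1, hμ2, _⟩ := g12g h
        have he : μ - E 1 - E 2 + E 2 = μ - E 1 := by
          ext j; fin_cases j <;> simp [addE, coordE] <;> omega
        rw [X_mul_monomial', he]
    have hF : X 1 * monomial (μ - E 1 - E 2) d12 = monomial (μ - E 2) d12 := by
      by_cases h : d12 = 0
      · rw [h]; simp
      · obtain ⟨hμ1, hμ2, _⟩ := g12g h
        have he : μ - E 1 - E 2 + E 1 = μ - E 2 := by
          ext j; fin_cases j <;> simp [addE, coordE] <;> omega
        rw [X_mul_monomial', he]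
    have hdec0 : (monomial (μ - E 0) c0 : MvPolynomial (Fin 3) K) =
        -(X 1 * monomial (μ - E 0 - E 1) d01) - X 2 * monomial (μ - E 0 - E 2) d02 := by
      rw [e0, hA, hC, sub_eq_add_neg, map_add, map_neg, map_neg]; ring
    have hdec1 : (monomial (μ - E 1) c1 : MvPolynomial (Fin 3) K) =
        X 0 * monomial (μ - E 0 - E 1) d01 - X 2 * monomial (μ - E 1 - E 2) d12 := by
      rw [e1, hB, hE, sub_eq_add_neg, map_add, map_neg]; ring
    have hdec2 : (monomial (μ - E 2) c2 : MvPolynomial (Fin 3) K) =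
        X 0 * monomial (μ - E 0 - E 2) d02 + X 1 * monomial (μ - E 1 - E 2) d12 := by
      rw [e2, hD, hF, map_add]
    have hmon0 : (monomial (μ - E 0) c0 : MvPolynomial (Fin 3) K) ∈ Idl K c := by
      by_cases h : c0 = 0
      · rw [h, monomial_zero]; exact Ideal.zero_mem _
      · exact monomial_mem (h0 h).2 _
    have hmon1 : (monomial (μ - E 1) c1 : MvPolynomial (Fin 3) K) ∈ Idl K c := by
      by_cases h : c1 = 0
      · rw [h, monomial_zero]; exact Ideal.zero_mem _
      · exact monomial_mem (h1 h).2 _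
    have hmon2 : (monomial (μ - E 2) c2 : MvPolynomial (Fin 3) K) ∈ Idl K c := by
      by_cases h : c2 = 0
      · rw [h, monomial_zero]; exact Ideal.zero_mem _
      · exact monomial_mem (h2 h).2 _
    have key0 : (f0 - monomial (μ - E 0) c0).support ⊆ f0.support := by
      by_cases h : μ 0 = 0
      · rw [hc0def, if_pos h, monomial_zero, sub_zero]
      · exact (support_sub_mono f0 _ _ (by rw [hc0def, if_neg h])).trans (Finset.erase_subset _ _)
    have key1 : (f1 - monomial (μ - E 1) c1).support ⊆ f1.support := by
      by_cases h : μ 1 = 0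
      · rw [hc1def, if_pos h, monomial_zero, sub_zero]
      · exact (support_sub_mono f1 _ _ (by rw [hc1def, if_neg h])).trans (Finset.erase_subset _ _)
    have key2 : (f2 - monomial (μ - E 2) c2).support ⊆ f2.support := by
      by_cases h : μ 2 = 0
      · rw [hc2def, if_pos h, monomial_zero, sub_zero]
      · exact (support_sub_mono f2 _ _ (by rw [hc2def, if_neg h])).trans (Finset.erase_subset _ _)
    have hz : X 0 * monomial (μ - E 0) c0 + X 1 * monomial (μ - E 1) c1 +
        X 2 * monomial (μ - E 2) c2 = 0 := by
      rw [hdec0, hdec1, hdec2]; ring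
    have hcyc' : X 0 * (f0 - monomial (μ - E 0) c0) + X 1 * (f1 - monomial (μ - E 1) c1) +
        X 2 * (f2 - monomial (μ - E 2) c2) = 0 := by
      linear_combination hcyc - hz
    have hcard' : (f0 - monomial (μ - E 0) c0).support.card +
        (f1 - monomial (μ - E 1) c1).support.card +
        (f2 - monomial (μ - E 2) c2).support.card ≤ n := by
      have k0 := Finset.card_le_card key0
      have k1 := Finset.card_le_card key1
      have k2 := Finset.card_le_card key2
      rcases hμpick with ⟨hμi, hmem⟩ | ⟨hμi, hmem⟩ | ⟨hμi, hmem⟩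
      · have := card_sub_mono_lt f0 (μ - E 0) c0 (by rw [hc0def, if_neg hμi]) hmem
        omega
      · have := card_sub_mono_lt f1 (μ - E 1) c1 (by rw [hc1def, if_neg hμi]) hmem
        omega
      · have := card_sub_mono_lt f2 (μ - E 2) c2 (by rw [hc2def, if_neg hμi]) hmem
        omega
    obtain ⟨g01', g02', g12', m01', m02', m12', q0, q1, q2⟩ := ih
      (f0 - monomial (μ - E 0) c0) (f1 - monomial (μ - E 1) c1) (f2 - monomial (μ - E 2) c2)
      (Ideal.sub_mem _ hf0 hmon0) (Ideal.sub_mem _ hf1 hmon1) (Ideal.sub_mem _ hf2 hmon2)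
      (fun ν hν => hd0 ν (key0 hν)) (fun ν hν => hd1 ν (key1 hν)) (fun ν hν => hd2 ν (key2 hν))
      hcard' hcyc'
    have hg01 : (monomial (μ - E 0 - E 1) d01 : MvPolynomial (Fin 3) K) ∈ Idl K c := by
      by_cases h : d01 = 0
      · rw [h, monomial_zero]; exact Ideal.zero_mem _
      · exact monomial_mem (g01g h).2.2 _
    have hg02 : (monomial (μ - E 0 - E 2) d02 : MvPolynomial (Fin 3) K) ∈ Idl K c := by
      by_cases h : d02 = 0
      · rw [h, monomial_zero]; exact Ideal.zero_mem _
      · exact monomial_mem (g02g h).2.2 _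
    have hg12 : (monomial (μ - E 1 - E 2) d12 : MvPolynomial (Fin 3) K) ∈ Idl K c := by
      by_cases h : d12 = 0
      · rw [h, monomial_zero]; exact Ideal.zero_mem _
      · exact monomial_mem (g12g h).2.2 _
    refine ⟨g01' + monomial (μ - E 0 - E 1) d01, g02' + monomial (μ - E 0 - E 2) d02,
      g12' + monomial (μ - E 1 - E 2) d12,
      Ideal.add_mem _ m01' hg01, Ideal.add_mem _ m02' hg02, Ideal.add_mem _ m12' hg12,
      ?_, ?_, ?_⟩
    · linear_combination q0 + hdec0
    · linear_combination q1 + hdec1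
    · linear_combination q2 + hdec2

section Glue

lemma fc {c : ℕ} {p : ℕ} (f : KoszulTerm (Idl K c) p) (s t : Finset (Fin 3)) (hs : s.card = p)
    (ht : t.card = p) (h : s = t) : f ⟨s, hs⟩ = f ⟨t, ht⟩ := by subst h; rfl

lemma D1_apply {c : ℕ} (f : KoszulTerm (Idl K c) 1) (h : (∅ : Finset (Fin 3)).card = 0) :
    ((koszulD f ⟨∅, h⟩ : Idl K c) : MvPolynomial (Fin 3) K) =
      X 0 * ((f ⟨{0}, by decide⟩ : Idl K c) : MvPolynomial (Fin 3) K) +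
      X 1 * ((f ⟨{1}, by decide⟩ : Idl K c) : MvPolynomial (Fin 3) K) +
      X 2 * ((f ⟨{2}, by decide⟩ : Idl K c) : MvPolynomial (Fin 3) K) := by
  simp only [koszulD]
  rw [Fin.sum_univ_three]
  rw [dif_neg (by decide : ¬(0:Fin 3) ∈ (∅:Finset (Fin 3))),
    dif_neg (by decide : ¬(1:Fin 3) ∈ (∅:Finset (Fin 3))),
    dif_neg (by decide : ¬(2:Fin 3) ∈ (∅:Finset (Fin 3)))]
  rw [fc f (insert 0 ∅) {0} (by decide) (by decide) (by decide),
    fc f (insert 1 ∅) {1} (by decide) (by decide) (by decide),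
    fc f (insert 2 ∅) {2} (by decide) (by decide) (by decide)]
  simp only [Finset.filter_empty, Finset.card_empty, pow_zero, one_smul,
    Submodule.coe_add, SetLike.val_smul, smul_eq_mul]

lemma D2_0 {c : ℕ} (f : KoszulTerm (Idl K c) 2) (h : ({0} : Finset (Fin 3)).card = 1) :
    ((koszulD f ⟨{0}, h⟩ : Idl K c) : MvPolynomial (Fin 3) K) =
      -(X 1 * ((f ⟨{0,1}, by decide⟩ : Idl K c) : MvPolynomial (Fin 3) K)) -
        X 2 * ((f ⟨{0,2}, by decide⟩ : Idl K c) : MvPolynomial (Fin 3) K) := by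
  simp only [koszulD]
  rw [Fin.sum_univ_three]
  rw [dif_pos (by decide : (0:Fin 3) ∈ ({0}:Finset (Fin 3))),
    dif_neg (by decide : ¬(1:Fin 3) ∈ ({0}:Finset (Fin 3))),
    dif_neg (by decide : ¬(2:Fin 3) ∈ ({0}:Finset (Fin 3)))]
  rw [fc f (insert 1 {0}) {0,1} (by decide) (by decide) (by decide),
    fc f (insert 2 {0}) {0,2} (by decide) (by decide) (by decide)]
  rw [show ({0}:Finset (Fin 3)).filter (fun i => i < 1) = {0} from by decide,
    show ({0}:Finset (Fin 3)).filter (fun i => i < 2) = {0} from by decide]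
  simp only [Finset.card_singleton, pow_one, neg_one_zsmul, zero_add,
    Submodule.coe_add, NegMemClass.coe_neg, SetLike.val_smul, smul_eq_mul]
  ring

lemma D2_1 {c : ℕ} (f : KoszulTerm (Idl K c) 2) (h : ({1} : Finset (Fin 3)).card = 1) :
    ((koszulD f ⟨{1}, h⟩ : Idl K c) : MvPolynomial (Fin 3) K) =
      X 0 * ((f ⟨{0,1}, by decide⟩ : Idl K c) : MvPolynomial (Fin 3) K) -
        X 2 * ((f ⟨{1,2}, by decide⟩ : Idl K c) : MvPolynomial (Fin 3) K) := by
  simp only [koszulD]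
  rw [Fin.sum_univ_three]
  rw [dif_neg (by decide : ¬(0:Fin 3) ∈ ({1}:Finset (Fin 3))),
    dif_pos (by decide : (1:Fin 3) ∈ ({1}:Finset (Fin 3))),
    dif_neg (by decide : ¬(2:Fin 3) ∈ ({1}:Finset (Fin 3)))]
  rw [fc f (insert 0 {1}) {0,1} (by decide) (by decide) (by decide),
    fc f (insert 2 {1}) {1,2} (by decide) (by decide) (by decide)]
  rw [show ({1}:Finset (Fin 3)).filter (fun i => i < 0) = ∅ from by decide,
    show ({1}:Finset (Fin 3)).filter (fun i => i < 2) = {1} from by decide]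
  simp only [Finset.card_singleton, Finset.card_empty, pow_zero, pow_one, one_smul,
    neg_one_zsmul, add_zero, Submodule.coe_add, NegMemClass.coe_neg,
    SetLike.val_smul, smul_eq_mul]
  ring

lemma D2_2 {c : ℕ} (f : KoszulTerm (Idl K c) 2) (h : ({2} : Finset (Fin 3)).card = 1) :
    ((koszulD f ⟨{2}, h⟩ : Idl K c) : MvPolynomial (Fin 3) K) =
      X 0 * ((f ⟨{0,2}, by decide⟩ : Idl K c) : MvPolynomial (Fin 3) K) +
        X 1 * ((f ⟨{1,2}, by decide⟩ : Idl K c) : MvPolynomial (Fin 3) K) := by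
  simp only [koszulD]
  rw [Fin.sum_univ_three]
  rw [dif_neg (by decide : ¬(0:Fin 3) ∈ ({2}:Finset (Fin 3))),
    dif_neg (by decide : ¬(1:Fin 3) ∈ ({2}:Finset (Fin 3))),
    dif_pos (by decide : (2:Fin 3) ∈ ({2}:Finset (Fin 3)))]
  rw [fc f (insert 0 {2}) {0,2} (by decide) (by decide) (by decide),
    fc f (insert 1 {2}) {1,2} (by decide) (by decide) (by decide)]
  rw [show ({2}:Finset (Fin 3)).filter (fun i => i < 0) = ∅ from by decide,
    show ({2}:Finset (Fin 3)).filter (fun i => i < 1) = ∅ from by decide]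
  simp only [Finset.card_empty, pow_zero, one_smul, add_zero,
    Submodule.coe_add, SetLike.val_smul, smul_eq_mul]

lemma D3_01 {c : ℕ} (f : KoszulTerm (Idl K c) 3) (h : ({0,1} : Finset (Fin 3)).card = 2) :
    ((koszulD f ⟨{0,1}, h⟩ : Idl K c) : MvPolynomial (Fin 3) K) =
      X 2 * ((f ⟨{0,1,2}, by decide⟩ : Idl K c) : MvPolynomial (Fin 3) K) := by
  simp only [koszulD]
  rw [Fin.sum_univ_three]
  rw [dif_pos (by decide : (0:Fin 3) ∈ ({0,1}:Finset (Fin 3))),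
    dif_pos (by decide : (1:Fin 3) ∈ ({0,1}:Finset (Fin 3))),
    dif_neg (by decide : ¬(2:Fin 3) ∈ ({0,1}:Finset (Fin 3)))]
  rw [fc f (insert 2 {0,1}) {0,1,2} (by decide) (by decide) (by decide)]
  rw [show ({0,1}:Finset (Fin 3)).filter (fun i => i < 2) = {0,1} from by decide]
  simp only [show ({0,1}:Finset (Fin 3)).card = 2 from by decide, neg_one_sq, one_smul,
    zero_add, SetLike.val_smul, smul_eq_mul]

lemma D3_02 {c : ℕ} (f : KoszulTerm (Idl K c) 3) (h : ({0,2} : Finset (Fin 3)).card = 2) :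
    ((koszulD f ⟨{0,2}, h⟩ : Idl K c) : MvPolynomial (Fin 3) K) =
      -(X 1 * ((f ⟨{0,1,2}, by decide⟩ : Idl K c) : MvPolynomial (Fin 3) K)) := by
  simp only [koszulD]
  rw [Fin.sum_univ_three]
  rw [dif_pos (by decide : (0:Fin 3) ∈ ({0,2}:Finset (Fin 3))),
    dif_neg (by decide : ¬(1:Fin 3) ∈ ({0,2}:Finset (Fin 3))),
    dif_pos (by decide : (2:Fin 3) ∈ ({0,2}:Finset (Fin 3)))]
  rw [fc f (insert 1 {0,2}) {0,1,2} (by decide) (by decide) (by decide)]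
  rw [show ({0,2}:Finset (Fin 3)).filter (fun i => i < 1) = {0} from by decide]
  simp only [Finset.card_singleton, pow_one, neg_one_zsmul, zero_add, add_zero,
    NegMemClass.coe_neg, SetLike.val_smul, smul_eq_mul]

lemma D3_12 {c : ℕ} (f : KoszulTerm (Idl K c) 3) (h : ({1,2} : Finset (Fin 3)).card = 2) :
    ((koszulD f ⟨{1,2}, h⟩ : Idl K c) : MvPolynomial (Fin 3) K) =
      X 0 * ((f ⟨{0,1,2}, by decide⟩ : Idl K c) : MvPolynomial (Fin 3) K) := by
  simp only [koszulD]
  rw [Fin.sum_univ_three]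
  rw [dif_neg (by decide : ¬(0:Fin 3) ∈ ({1,2}:Finset (Fin 3))),
    dif_pos (by decide : (1:Fin 3) ∈ ({1,2}:Finset (Fin 3))),
    dif_pos (by decide : (2:Fin 3) ∈ ({1,2}:Finset (Fin 3)))]
  rw [fc f (insert 0 {1,2}) {0,1,2} (by decide) (by decide) (by decide)]
  rw [show ({1,2}:Finset (Fin 3)).filter (fun i => i < 0) = ∅ from by decide]
  simp only [Finset.card_empty, pow_zero, one_smul, zero_add, add_zero,
    SetLike.val_smul, smul_eq_mul]

lemma D4_univ {c : ℕ} (g : KoszulTerm (Idl K c) 4) (s : Finset (Fin 3)) (hs : s.card = 3) :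
    koszulD g ⟨s, hs⟩ = 0 := by
  have huniv : s = {0,1,2} := by
    have : ∀ t : Finset (Fin 3), t.card = 3 → t = {0,1,2} := by decide
    exact this s hs
  subst huniv
  simp only [koszulD]
  rw [Fin.sum_univ_three]
  rw [dif_pos (by decide : (0:Fin 3) ∈ ({0,1,2}:Finset (Fin 3))),
    dif_pos (by decide : (1:Fin 3) ∈ ({0,1,2}:Finset (Fin 3))),
    dif_pos (by decide : (2:Fin 3) ∈ ({0,1,2}:Finset (Fin 3)))]
  simp

lemma hom_supp {h : MvPolynomial (Fin 3) K} {d : ℕ} (hh : h.IsHomogeneous d)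
    {ν : Fin 3 →₀ ℕ} (hν : ν ∈ h.support) : ν 0 + ν 1 + ν 2 = d := by
  have h1 := hh (mem_support_iff.mp hν)
  rw [Finsupp.weight_apply, Finsupp.sum_fintype _ _ (fun i => by simp),
    Fin.sum_univ_three] at h1
  simpa using h1

lemma card1_cases (s : Finset (Fin 3)) (h : s.card = 1) :
    s = {0} ∨ s = {1} ∨ s = {2} := by
  have : ∀ t : Finset (Fin 3), t.card = 1 → t = {0} ∨ t = {1} ∨ t = {2} := by decide
  exact this s h

lemma card2_cases (s : Finset (Fin 3)) (h : s.card = 2) :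
    s = {0,1} ∨ s = {0,2} ∨ s = {1,2} := by
  have : ∀ t : Finset (Fin 3), t.card = 2 → t = {0,1} ∨ t = {0,2} ∨ t = {1,2} := by decide
  exact this s h


noncomputable def mk1 {c : ℕ} (a0 a1 a2 : Idl K c) : KoszulTerm (Idl K c) 1 := fun s =>
  if s.val = {0} then a0 else if s.val = {1} then a1 else a2

lemma mk1_0 {c : ℕ} (a0 a1 a2 : Idl K c) (h : ({0}:Finset (Fin 3)).card = 1) :
    mk1 a0 a1 a2 ⟨{0}, h⟩ = a0 := if_pos rfl
lemma mk1_1 {c : ℕ} (a0 a1 a2 : Idl K c) (h : ({1}:Finset (Fin 3)).card = 1) :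
    mk1 a0 a1 a2 ⟨{1}, h⟩ = a1 :=
  (if_neg (by decide : ¬({1}:Finset (Fin 3)) = {0})).trans (if_pos rfl)
lemma mk1_2 {c : ℕ} (a0 a1 a2 : Idl K c) (h : ({2}:Finset (Fin 3)).card = 1) :
    mk1 a0 a1 a2 ⟨{2}, h⟩ = a2 :=
  (if_neg (by decide : ¬({2}:Finset (Fin 3)) = {0})).trans
    (if_neg (by decide : ¬({2}:Finset (Fin 3)) = {1}))

noncomputable def mk2 {c : ℕ} (a01 a02 a12 : Idl K c) : KoszulTerm (Idl K c) 2 := fun s =>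
  if s.val = {0,1} then a01 else if s.val = {0,2} then a02 else a12

lemma mk2_01 {c : ℕ} (a01 a02 a12 : Idl K c) (h : ({0,1}:Finset (Fin 3)).card = 2) :
    mk2 a01 a02 a12 ⟨{0,1}, h⟩ = a01 := if_pos rfl
lemma mk2_02 {c : ℕ} (a01 a02 a12 : Idl K c) (h : ({0,2}:Finset (Fin 3)).card = 2) :
    mk2 a01 a02 a12 ⟨{0,2}, h⟩ = a02 :=
  (if_neg (by decide : ¬({0,2}:Finset (Fin 3)) = {0,1})).trans (if_pos rfl)
lemma mk2_12 {c : ℕ} (a01 a02 a12 : Idl K c) (h : ({1,2}:Finset (Fin 3)).card = 2) :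
    mk2 a01 a02 a12 ⟨{1,2}, h⟩ = a12 :=
  (if_neg (by decide : ¬({1,2}:Finset (Fin 3)) = {0,1})).trans
    (if_neg (by decide : ¬({1,2}:Finset (Fin 3)) = {0,2}))

noncomputable def mk3 {c : ℕ} (a : Idl K c) : KoszulTerm (Idl K c) 3 := fun _ => a

/-- p = 0 upper bound -/
lemma U0 {c : ℕ} (hc : 1 ≤ c) (d : ℕ) (hd : 3 * c ≤ d) (f : KoszulTerm (Idl K c) 0)
    (hhom : ∀ s, ((f s : Idl K c) : MvPolynomial (Fin 3) K).IsHomogeneous d) :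
    IsKoszulBoundary f := by
  obtain ⟨u0, u1, u2, hu0, hu1, hu2, heq⟩ := L0 hc
    ((f ⟨∅, rfl⟩ : Idl K c) : MvPolynomial (Fin 3) K).support.card
    ((f ⟨∅, rfl⟩ : Idl K c) : MvPolynomial (Fin 3) K) (f ⟨∅, rfl⟩).2
    (fun ν hν => by rw [hom_supp (hhom ⟨∅, rfl⟩) hν]; exact hd) le_rfl
  refine ⟨mk1 ⟨u0, hu0⟩ ⟨u1, hu1⟩ ⟨u2, hu2⟩, funext fun s => ?_⟩
  obtain ⟨sv, hs⟩ := s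
  have hsv : sv = ∅ := Finset.card_eq_zero.mp hs
  subst hsv
  apply Subtype.ext
  rw [D1_apply, mk1_0, mk1_1, mk1_2]
  exact heq.symm

lemma deg3 (ν : Fin 3 →₀ ℕ) : ν.degree = ν 0 + ν 1 + ν 2 := by
  classical
  rw [Finsupp.degree_apply, Finset.sum_subset (Finset.subset_univ _)
    (fun i _ hi => Finsupp.notMem_support_iff.mp hi), Fin.sum_univ_three]

/-- p = 1 upper bound -/
lemma U1 {c : ℕ} (hc : 1 ≤ c) (d : ℕ) (hd : 3 * c ≤ d) (f : KoszulTerm (Idl K c) 1)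
    (hcyc : koszulD f = 0)
    (hhom : ∀ s, ((f s : Idl K c) : MvPolynomial (Fin 3) K).IsHomogeneous d) :
    IsKoszulBoundary f := by
  have hc0 := congrArg
    (fun (t : KoszulTerm (Idl K c) 0) => ((t ⟨∅, rfl⟩ : Idl K c) : MvPolynomial (Fin 3) K)) hcyc
  erw [D1_apply] at hc0
  simp only [Pi.zero_apply, ZeroMemClass.coe_zero] at hc0
  obtain ⟨g01, g02, g12, h01, h02, h12, e0, e1, e2⟩ := L1 hc
    (((f ⟨{0}, by decide⟩ : Idl K c) : MvPolynomial (Fin 3) K).support.card +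
     ((f ⟨{1}, by decide⟩ : Idl K c) : MvPolynomial (Fin 3) K).support.card +
     ((f ⟨{2}, by decide⟩ : Idl K c) : MvPolynomial (Fin 3) K).support.card)
    _ _ _ (f ⟨{0}, by decide⟩).2 (f ⟨{1}, by decide⟩).2 (f ⟨{2}, by decide⟩).2
    (fun ν hν => by rw [hom_supp (hhom _) hν]; exact hd)
    (fun ν hν => by rw [hom_supp (hhom _) hν]; exact hd)
    (fun ν hν => by rw [hom_supp (hhom _) hν]; exact hd)
    le_rfl hc0
  refine ⟨mk2 ⟨g01, h01⟩ ⟨g02, h02⟩ ⟨g12, h12⟩, funext fun s => ?_⟩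
  obtain ⟨sv, hs⟩ := s
  rcases card1_cases sv hs with rfl | rfl | rfl
  · apply Subtype.ext
    rw [D2_0, mk2_01, mk2_02]
    exact e0.symm
  · apply Subtype.ext
    rw [D2_1, mk2_01, mk2_12]
    exact e1.symm
  · apply Subtype.ext
    rw [D2_2, mk2_02, mk2_12]
    exact e2.symm

/-- p = 2 upper bound -/
lemma U2 {c : ℕ} (hc : 1 ≤ c) (f : KoszulTerm (Idl K c) 2) (hcyc : koszulD f = 0) :
    IsKoszulBoundary f := by
  have ev0 := congrArg
    (fun (t : KoszulTerm (Idl K c) 1) => ((t ⟨{0}, by decide⟩ : Idl K c) : MvPolynomial (Fin 3) K)) hcyc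
  have ev1 := congrArg
    (fun (t : KoszulTerm (Idl K c) 1) => ((t ⟨{1}, by decide⟩ : Idl K c) : MvPolynomial (Fin 3) K)) hcyc
  have ev2 := congrArg
    (fun (t : KoszulTerm (Idl K c) 1) => ((t ⟨{2}, by decide⟩ : Idl K c) : MvPolynomial (Fin 3) K)) hcyc
  rw [D2_0] at ev0
  rw [D2_1] at ev1
  rw [D2_2] at ev2
  simp only [Pi.zero_apply, ZeroMemClass.coe_zero] at ev0 ev1 ev2
  obtain ⟨g, hg, r1, r2, r3⟩ := L2 hc
    ((f ⟨{0,1}, by decide⟩ : Idl K c) : MvPolynomial (Fin 3) K).support.card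
    _ _ _ (f ⟨{0,1}, by decide⟩).2 (f ⟨{0,2}, by decide⟩).2 (f ⟨{1,2}, by decide⟩).2
    le_rfl (by linear_combination -ev0) ev1 ev2
  refine ⟨mk3 ⟨g, hg⟩, funext fun s => ?_⟩
  obtain ⟨sv, hs⟩ := s
  rcases card2_cases sv hs with rfl | rfl | rfl
  · apply Subtype.ext
    rw [D3_01]
    exact r1.symm
  · apply Subtype.ext
    rw [D3_02]
    exact (by linear_combination r2 : ((f ⟨{0,2}, by decide⟩ : Idl K c) : MvPolynomial (Fin 3) K) = -(X 1 * g)).symm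
  · apply Subtype.ext
    rw [D3_12]
    exact r3.symm

/-- p = 3 upper bound -/
lemma U3 {c : ℕ} (f : KoszulTerm (Idl K c) 3) (hcyc : koszulD f = 0) :
    IsKoszulBoundary f := by
  have h1 := congrArg
    (fun (t : KoszulTerm (Idl K c) 2) => ((t ⟨{0,1}, by decide⟩ : Idl K c) : MvPolynomial (Fin 3) K)) hcyc
  rw [D3_01] at h1
  simp only [Pi.zero_apply, ZeroMemClass.coe_zero] at h1
  have hzero : ((f ⟨{0,1,2}, by decide⟩ : Idl K c) : MvPolynomial (Fin 3) K) = 0 := by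
    rcases mul_eq_zero.mp h1 with h | h
    · exact absurd h (X_ne_zero _)
    · exact h
  refine ⟨fun _ => 0, funext fun s => ?_⟩
  obtain ⟨sv, hs⟩ := s
  rw [D4_univ]
  have hsv : sv = {0,1,2} := by
    have : ∀ t : Finset (Fin 3), t.card = 3 → t = {0,1,2} := by decide
    exact this sv hs
  subst hsv
  exact (Subtype.ext hzero).symm

/-- p ≥ 4 upper bound -/
lemma U4 {c : ℕ} (p : ℕ) (f : KoszulTerm (Idl K c) (p + 4)) : IsKoszulBoundary f := by
  refine ⟨fun _ => 0, funext fun s => ?_⟩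
  exfalso
  have h3 : s.1.card ≤ 3 := by
    have := Finset.card_le_univ s.1
    simpa using this
  have h4 := s.2
  omega

lemma betti {c : ℕ} (hc : 1 ≤ c) : BettiNonzero (Idl K c) 1 (3 * c) := by
  classical
  set ν0 : Fin 3 →₀ ℕ := Finsupp.single 0 (c-1) + Finsupp.single 1 c + Finsupp.single 2 c
    with hν0
  set ν1 : Fin 3 →₀ ℕ := Finsupp.single 0 c + Finsupp.single 1 (c-1) + Finsupp.single 2 c
    with hν1
  have c00 : ν0 0 = c - 1 := by simp [hν0, Finsupp.single_apply]
  have c01 : ν0 1 = c := by simp [hν0, Finsupp.single_apply]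
  have c02 : ν0 2 = c := by simp [hν0, Finsupp.single_apply]
  have c10 : ν1 0 = c := by simp [hν1, Finsupp.single_apply]
  have c11 : ν1 1 = c - 1 := by simp [hν1, Finsupp.single_apply]
  have c12 : ν1 2 = c := by simp [hν1, Finsupp.single_apply]
  have m0 : Mem c ν0 := Or.inl ⟨by omega, by omega⟩
  have m1 : Mem c ν1 := Or.inr (Or.inl ⟨by omega, by omega⟩)
  refine ⟨mk1 ⟨monomial ν0 1, monomial_mem m0 1⟩ ⟨monomial ν1 (-1), monomial_mem m1 (-1)⟩ 0,
    ?_, ?_, ?_⟩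
  · show koszulD _ = 0
    funext s
    obtain ⟨sv, hs⟩ := s
    have hsv : sv = ∅ := Finset.card_eq_zero.mp hs
    subst hsv
    apply Subtype.ext
    rw [D1_apply, mk1_0, mk1_1, mk1_2]
    have hx0 : X 0 * monomial ν0 (1:K) = monomial (ν0 + E 0) 1 := X_mul_monomial' _ _ _
    have hx1 : X 1 * monomial ν1 (-1:K) = monomial (ν1 + E 1) (-1) := X_mul_monomial' _ _ _
    have heq : ν0 + E 0 = ν1 + E 1 := by
      ext j
      fin_cases j <;> simp only [addE] <;>
        simp [c00, c01, c02, c10, c11, c12] <;> omega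
    rw [hx0, hx1, heq]
    simp only [Pi.zero_apply, ZeroMemClass.coe_zero, add_zero]
    rw [← map_add]
    norm_num
  · rintro ⟨g, hg⟩
    have h1 := congrArg
      (fun (t : KoszulTerm (Idl K c) 1) => ((t ⟨{0}, by decide⟩ : Idl K c) : MvPolynomial (Fin 3) K)) hg
    rw [D2_0, mk1_0] at h1
    have h2 := congrArg (coeff ν0) h1
    rw [coeff_monomial, if_pos rfl, coeff_sub, coeff_neg, coeff_X_mul'', coeff_X_mul''] at h2
    rw [if_neg (by omega : ¬ ν0 1 = 0), if_neg (by omega : ¬ ν0 2 = 0)] at h2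
    rw [coeff_eq_zero_of_not_Mem (g ⟨{0,1}, by decide⟩).2
        (by rw [Mem_sub1]; omega),
      coeff_eq_zero_of_not_Mem (g ⟨{0,2}, by decide⟩).2
        (by rw [Mem_sub2]; omega)] at h2
    norm_num at h2
  · intro s
    obtain ⟨sv, hs⟩ := s
    rcases card1_cases sv hs with rfl | rfl | rfl
    · show (((mk1 _ _ _ : KoszulTerm (Idl K c) 1) ⟨{0}, hs⟩ : Idl K c) :
        MvPolynomial (Fin 3) K).IsHomogeneous (3 * c - 1)
      rw [mk1_0]
      exact isHomogeneous_monomial 1 (by rw [deg3]; omega)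
    · show (((mk1 _ _ _ : KoszulTerm (Idl K c) 1) ⟨{1}, hs⟩ : Idl K c) :
        MvPolynomial (Fin 3) K).IsHomogeneous (3 * c - 1)
      rw [mk1_1]
      exact isHomogeneous_monomial (-1) (by rw [deg3]; omega)
    · show (((mk1 _ _ _ : KoszulTerm (Idl K c) 1) ⟨{2}, hs⟩ : Idl K c) :
        MvPolynomial (Fin 3) K).IsHomogeneous (3 * c - 1)
      rw [mk1_2]
      exact isHomogeneous_zero _ _ _

end Glue

end Stmt16

/-- For `c ≥ 1` and `N = ((x₂x₃)^c, (x₁x₃)^c, (x₁x₂)^c) ⊆ K[x₁,x₂,x₃]`,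
`reg N = 3c - 1`. -/
theorem stmt_16 {K : Type*} [Field K] (c : ℕ) (hc : 1 ≤ c) :
    reg (Ideal.span {((X 1 * X 2) ^ c : MvPolynomial (Fin 3) K),
      (X 0 * X 2) ^ c, (X 0 * X 1) ^ c}) = 3 * c - 1 := by
  show reg (Stmt16.Idl K c) = 3 * c - 1
  have hg : IsGreatest {r : ℕ | ∃ p q : ℕ, BettiNonzero (Stmt16.Idl K c) p q ∧ q - p = r}
      (3 * c - 1) := by
    constructor
    · exact ⟨1, 3 * c, Stmt16.betti hc, rfl⟩
    · rintro r ⟨p, q, ⟨f, hcyc, hnb, hhom⟩, rfl⟩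
      by_contra hgt
      push_neg at hgt
      have h3c : 3 * c ≤ q - p := by omega
      apply hnb
      clear hgt hnb
      match p, f, hcyc, hhom, h3c with
      | 0, f, _, hhom, h3c => exact Stmt16.U0 hc (q - 0) h3c f hhom
      | 1, f, hcyc, hhom, h3c => exact Stmt16.U1 hc (q - 1) h3c f hcyc hhom
      | 2, f, hcyc, _, _ => exact Stmt16.U2 hc f hcyc
      | 3, f, hcyc, _, _ => exact Stmt16.U3 f hcyc
      | (p+4), f, _, _, _ => exact Stmt16.U4 p f
  exact hg.csSup_eq
end

section
/- Let I ⊆ S = K[x_1, x_2, x_3] be an equigenerated monomial ideal of degree d that is integrally closed (Ī = I), written as in the Setting with generators u_{ij} = x_1^{a_{ij}} x_2^{b_{ij}} in the layer I_i = (u_{i1}, …, u_{iℓ_i}) x_3^{c_i}. Then within every layer i the x_1-exponents are consecutive: a_{i(j+1)} − a_{ij} = 1 and b_{ij} − b_{i(j+1)} = 1 for all j ∈ {1, …, ℓ_i − 1}. -/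
open MvPolynomial

lemma mon_eq3 {K : Type*} [Field K] (A B C : ℕ) :
    (X 0 ^ A * X 1 ^ B * X 2 ^ C : MvPolynomial (Fin 3) K) =
    monomial (Finsupp.single 0 A + Finsupp.single 1 B + Finsupp.single 2 C) 1 := by
  rw [X_pow_eq_monomial, X_pow_eq_monomial, X_pow_eq_monomial, monomial_mul, monomial_mul]
  simp

lemma coord_eval3 (A B C : ℕ) :
    ((Finsupp.single (0:Fin 3) A + Finsupp.single 1 B + Finsupp.single 2 C : Fin 3 →₀ ℕ)) 0 = A ∧
    ((Finsupp.single (0:Fin 3) A + Finsupp.single 1 B + Finsupp.single 2 C : Fin 3 →₀ ℕ)) 1 = B ∧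
    ((Finsupp.single (0:Fin 3) A + Finsupp.single 1 B + Finsupp.single 2 C : Fin 3 →₀ ℕ)) 2 = C := by
  simp [Finsupp.single_apply]

lemma pow33 {K : Type*} [Field K] (A B C m : ℕ) :
    (X 0 ^ A * X 1 ^ B * X 2 ^ C : MvPolynomial (Fin 3) K) ^ m =
    X 0 ^ (A*m) * X 1 ^ (B*m) * X 2 ^ (C*m) := by
  rw [mul_pow, mul_pow, pow_mul, pow_mul, pow_mul]


/-- Let `I ⊆ K[x₁,x₂,x₃]` be an integrally closed equigenerated monomial
ideal of degree `d`, written as in the Setting. Then within each layer the `x₁`-exponents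
(and `x₂`-exponents) are consecutive. -/
theorem stmt_17 {K : Type*} [Field K] (d t : ℕ) (ht : 1 ≤ t)
    (c : Fin t → ℕ) (hc : StrictMono c)
    (ℓ : Fin t → ℕ) (hℓ : ∀ i, 1 ≤ ℓ i)
    (a b : (i : Fin t) → Fin (ℓ i) → ℕ)
    (ha : ∀ i, StrictMono (a i))
    (hd : ∀ i j, a i j + b i j + c i = d)
    (I : Ideal (MvPolynomial (Fin 3) K))
    (hI : I = Ideal.span (Set.range fun q : (Σ i : Fin t, Fin (ℓ i)) =>
      (X 0 ^ (a q.1 q.2) * X 1 ^ (b q.1 q.2) * X 2 ^ (c q.1) :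
        MvPolynomial (Fin 3) K)))
    (hclosed : intCl I = I) :
    ∀ (i : Fin t) (j : ℕ) (hj : j + 1 < ℓ i),
      a i ⟨j + 1, hj⟩ - a i ⟨j, by omega⟩ = 1 ∧
      b i ⟨j, by omega⟩ - b i ⟨j + 1, hj⟩ = 1 := by
  have hIm : I = Ideal.span ((fun s => monomial s (1:K)) ''
      (Set.range fun q : (Σ i : Fin t, Fin (ℓ i)) =>
        (Finsupp.single 0 (a q.1 q.2) + Finsupp.single 1 (b q.1 q.2)
          + Finsupp.single 2 (c q.1) : Fin 3 →₀ ℕ))) := by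
    rw [hI, ← Set.range_comp]
    exact congrArg _ (congrArg _ (funext fun q => mon_eq3 _ _ _))
  intro i j hj
  have hjlt : j < ℓ i := by omega
  suffices h : a i ⟨j + 1, hj⟩ = a i ⟨j, hjlt⟩ + 1 by
    have hd1 := hd i ⟨j, hjlt⟩
    have hd2 := hd i ⟨j + 1, hj⟩
    exact ⟨by omega, by omega⟩
  by_contra hne
  have hlt : a i ⟨j, hjlt⟩ < a i ⟨j + 1, hj⟩ := ha i (by simp [Fin.lt_def])
  obtain ⟨k1, hk⟩ : ∃ k1, a i ⟨j + 1, hj⟩ = a i ⟨j, hjlt⟩ + (k1 + 1) :=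
    ⟨a i ⟨j + 1, hj⟩ - a i ⟨j, hjlt⟩ - 1, by omega⟩
  have hk2 : 1 ≤ k1 := by omega
  have hd1 := hd i ⟨j, hjlt⟩
  have hd2 := hd i ⟨j + 1, hj⟩
  have hb : b i ⟨j, hjlt⟩ = b i ⟨j + 1, hj⟩ + (k1 + 1) := by omega
  have hbpos : 1 ≤ b i ⟨j, hjlt⟩ := by omega
  have hg1 : (X 0 ^ (a i ⟨j, hjlt⟩) * X 1 ^ (b i ⟨j, hjlt⟩) * X 2 ^ (c i)
      : MvPolynomial (Fin 3) K) ∈ I := by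
    rw [hI]; exact Ideal.subset_span ⟨⟨i, ⟨j, hjlt⟩⟩, rfl⟩
  have hg2 : (X 0 ^ (a i ⟨j + 1, hj⟩) * X 1 ^ (b i ⟨j + 1, hj⟩) * X 2 ^ (c i)
      : MvPolynomial (Fin 3) K) ∈ I := by
    rw [hI]; exact Ideal.subset_span ⟨⟨i, ⟨j + 1, hj⟩⟩, rfl⟩
  have hpowk : (X 0 ^ (a i ⟨j, hjlt⟩ + 1) * X 1 ^ (b i ⟨j, hjlt⟩ - 1) * X 2 ^ (c i)
        : MvPolynomial (Fin 3) K) ^ (k1 + 1)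
      = (X 0 ^ (a i ⟨j, hjlt⟩) * X 1 ^ (b i ⟨j, hjlt⟩) * X 2 ^ (c i)) ^ k1
        * (X 0 ^ (a i ⟨j + 1, hj⟩) * X 1 ^ (b i ⟨j + 1, hj⟩) * X 2 ^ (c i)) := by
    rw [pow33, pow33]
    rw [show (a i ⟨j, hjlt⟩ + 1) * (k1 + 1) = a i ⟨j, hjlt⟩ * k1 + a i ⟨j + 1, hj⟩ by
          rw [hk]; ring,
        show (b i ⟨j, hjlt⟩ - 1) * (k1 + 1) = b i ⟨j, hjlt⟩ * k1 + b i ⟨j + 1, hj⟩ by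
          rw [show b i ⟨j, hjlt⟩ - 1 = b i ⟨j + 1, hj⟩ + k1 from by omega, hb]; ring,
        show (c i) * (k1 + 1) = c i * k1 + c i by ring]
    rw [pow_add, pow_add, pow_add]; ring
  have hukIk : (X 0 ^ (a i ⟨j, hjlt⟩ + 1) * X 1 ^ (b i ⟨j, hjlt⟩ - 1) * X 2 ^ (c i)
      : MvPolynomial (Fin 3) K) ^ (k1 + 1) ∈ I ^ (k1 + 1) := by
    rw [hpowk, pow_succ]
    exact Ideal.mul_mem_mul (Ideal.pow_mem_pow hg1 _) hg2
  have huI : (X 0 ^ (a i ⟨j, hjlt⟩ + 1) * X 1 ^ (b i ⟨j, hjlt⟩ - 1) * X 2 ^ (c i)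
      : MvPolynomial (Fin 3) K) ∈ I := by
    rw [← hclosed]
    exact Ideal.subset_span ⟨⟨_, mon_eq3 _ _ _⟩, k1 + 1, by omega, hukIk⟩
  rw [mon_eq3, hIm] at huI
  have hmem : (Finsupp.single (0:Fin 3) (a i ⟨j, hjlt⟩ + 1)
      + Finsupp.single 1 (b i ⟨j, hjlt⟩ - 1) + Finsupp.single 2 (c i)) ∈
      (monomial (Finsupp.single (0:Fin 3) (a i ⟨j, hjlt⟩ + 1)
      + Finsupp.single 1 (b i ⟨j, hjlt⟩ - 1) + Finsupp.single 2 (c i)) (1:K)).support := by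
    classical
    rw [mem_support_iff, coeff_monomial]
    simp
  obtain ⟨si, ⟨q, rfl⟩, hle⟩ := mem_ideal_span_monomial_image.mp huI _ hmem
  have h0 := Finsupp.le_def.mp hle 0
  have h1 := Finsupp.le_def.mp hle 1
  have h2 := Finsupp.le_def.mp hle 2
  obtain ⟨e0, e1, e2⟩ := coord_eval3 (a q.1 q.2) (b q.1 q.2) (c q.1)
  obtain ⟨f0, f1, f2⟩ := coord_eval3 (a i ⟨j, hjlt⟩ + 1) (b i ⟨j, hjlt⟩ - 1) (c i)
  rw [e0, f0] at h0
  rw [e1, f1] at h1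
  rw [e2, f2] at h2
  have hsum := hd q.1 q.2
  have hcq : c q.1 = c i := by omega
  have hq1 : q.1 = i := hc.injective hcq
  subst hq1
  have l1 : (⟨j, hjlt⟩ : Fin (ℓ q.1)) < q.2 := (ha q.1).lt_iff_lt.mp (by omega)
  have l2 : q.2 < (⟨j + 1, hj⟩ : Fin (ℓ q.1)) := (ha q.1).lt_iff_lt.mp (by omega)
  rw [Fin.lt_def] at l1 l2
  simp only [Fin.val_mk] at l1 l2
  omega
end
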